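/- Molien's theorem: let G be a finite group acting linearly on a finite-dimensional complex vector space V. Then the Hilbert series of the invariant ring satisfies ∑_{i≥0} dim_ℂ (Sym^i V)^G · q^i = (1/|G|) ∑_{g∈G} 1/det(1 - q·g), as formal power series in q. -/

import Mathlib

open PiTensorProduct PowerSeries
open scoped TensorProduct

noncomputable section

def symRel (V : Type*) [AddCommGroup V] [Module ℂ V] (i : ℕ) :
    Submodule ℂ (TensorPower ℂ i V) :=
  Submodule.span ℂ {x | ∃ (v : Fin i → V) (σ : Equiv.Perm (Fin i)),
    x = tprod ℂ v - tprod ℂ (v ∘ σ)}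

def SymPow (V : Type*) [AddCommGroup V] [Module ℂ V] (i : ℕ) :=
  (TensorPower ℂ i V) ⧸ symRel V i

instance (V : Type*) [AddCommGroup V] [Module ℂ V] (i : ℕ) : AddCommGroup (SymPow V i) :=
  inferInstanceAs (AddCommGroup ((TensorPower ℂ i V) ⧸ symRel V i))
instance (V : Type*) [AddCommGroup V] [Module ℂ V] (i : ℕ) : Module ℂ (SymPow V i) :=
  inferInstanceAs (Module ℂ ((TensorPower ℂ i V) ⧸ symRel V i))

def SymPow.map {V : Type*} [AddCommGroup V] [Module ℂ V] (i : ℕ) (w : V →ₗ[ℂ] V) :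
    SymPow V i →ₗ[ℂ] SymPow V i :=
  Submodule.mapQ (symRel V i) (symRel V i) (PiTensorProduct.map fun _ => w) (by
    rw [symRel, Submodule.span_le]
    rintro x ⟨v, σ, rfl⟩
    simp only [SetLike.mem_coe, Submodule.mem_comap, map_sub, PiTensorProduct.map_tprod]
    exact Submodule.subset_span ⟨fun j => w (v j), σ, rfl⟩)

end

/-!
Every `ρ g` has finite order, hence is diagonalizable: `g v_j = λ_j v_j` for a basis `v`.
The monomials `v^m`, `m` a multiset of size `i`, form a basis of `Sym^i V` on which `g` acts by
`λ^m`, so `tr(g | Sym^i V) = ∑_m λ^m` is the coefficient of `q^i` in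
`∏_j (1 - λ_j q)⁻¹ = det(1 - q g)⁻¹`. Averaging over `G`: `|G|⁻¹ ∑_g g` is a projection onto the
invariants, so its trace `|G|⁻¹ ∑_g tr(g | W)` is `dim W^G`.
-/

noncomputable section

open Finset

namespace Sym

variable {κ : Type*} {i : ℕ}

def ofFn (k : Fin i → κ) : Sym κ i := ⟨univ.val.map k, by simp⟩

lemma prod_map_ofFn {M : Type*} [CommMonoid M] (k : Fin i → κ) (f : κ → M) :
    ((ofFn k).1.map f).prod = ∏ j, f (k j) := by
  rw [ofFn, Multiset.map_map, prod_map_val, Function.comp_def]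

lemma exists_ofFn_eq (m : Sym κ i) : ∃ k : Fin i → κ, ofFn k = m := by
  have hlen : m.1.toList.length = i := by simp
  refine ⟨fun j => m.1.toList.get (j.cast hlen.symm), Subtype.ext ?_⟩
  simp only [ofFn, Fin.univ_val_map]
  conv_rhs => rw [← Multiset.coe_toList m.1]
  exact congrArg _ ((List.ofFn_congr hlen _).symm.trans (List.ofFn_get _))

def toFn (m : Sym κ i) : Fin i → κ := (exists_ofFn_eq m).choose

lemma ofFn_toFn (m : Sym κ i) : ofFn m.toFn = m := (exists_ofFn_eq m).choose_spec

lemma exists_perm_of_ofFn_eq {k k' : Fin i → κ} (h : ofFn k = ofFn k') :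
    ∃ σ : Equiv.Perm (Fin i), k' = k ∘ σ := by
  classical
  have hfib (a : κ) : Fintype.card {j // k' j = a} = Fintype.card {j // k j = a} := by
    have := congrArg (fun m : Sym κ i => m.1.count a) h
    simp only [ofFn, Multiset.count_map] at this
    simp only [Fintype.card_subtype, card, filter_val, eq_comm (a := a)] at this ⊢
    exact this.symm
  refine ⟨Equiv.ofFiberEquiv fun a => Fintype.equivOfCardEq (hfib a), funext fun j => ?_⟩
  exact (Equiv.ofFiberEquiv_map _ j).symm

lemma toFinsupp_ofFn [DecidableEq κ] (k : Fin i → κ) :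
    Multiset.toFinsupp (ofFn k).1 = ∑ j, Finsupp.single (k j) 1 := by
  ext a
  simp only [ofFn, Multiset.toFinsupp_apply, Multiset.count_map, Finsupp.coe_finsetSum,
    Finset.sum_apply, Finsupp.single_apply, sum_boole, Nat.cast_id, eq_comm (a := a)]
  rfl

end Sym

open MvPolynomial in
lemma MvPolynomial.prod_X_eq_monomial {R κ : Type*} [CommSemiring R] {i : ℕ} [DecidableEq κ]
    (k : Fin i → κ) :
    ∏ j, (X (k j) : MvPolynomial κ R) = monomial (Multiset.toFinsupp (Sym.ofFn k).1) 1 := by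
  rw [Sym.toFinsupp_ofFn, monomial_sum_one]
  rfl

lemma PowerSeries.one_sub_C_mul_X_mul_mk_pow {R : Type*} [CommRing R] (a : R) :
    (1 - C a * X) * mk (fun n => a ^ n) = 1 := by
  have h := congrArg (rescale a) (mk_one_mul_one_sub_eq_one R)
  rw [map_mul, map_sub, map_one, rescale_X, rescale_mk] at h
  simpa [mul_comm] using h

lemma PowerSeries.mk_sum_sym_eq_prod {R κ : Type*} [CommRing R] [Fintype κ] [DecidableEq κ]
    (a : κ → R) :
    (mk fun i => ∑ m : Sym κ i, (m.1.map a).prod) = ∏ q, mk (fun n => a q ^ n) := by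
  ext d
  rw [coeff_prod, coeff_mk]
  refine Finset.sum_bij' (fun m _ => Multiset.toFinsupp m.1)
    (fun l hl => ⟨Finsupp.toMultiset l, ?_⟩) (fun m _ => ?_) (fun _ _ => mem_univ _)
    (fun m _ => Subtype.ext (Multiset.toFinsupp_toMultiset _))
    (fun l _ => Finsupp.toMultiset_toFinsupp l) (fun m _ => ?_)
  · simpa [Finsupp.card_toMultiset, Finsupp.sum_fintype, mem_finsuppAntidiag] using hl
  · refine mem_finsuppAntidiag.2 ⟨?_, subset_univ _⟩
    exact (Finsupp.sum_fintype _ _ fun _ => rfl).symm.trans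
      ((Multiset.toFinsupp_sum_eq m.1).trans m.2)
  · simp only [coeff_mk, Multiset.toFinsupp_apply, prod_multiset_map_count]
    exact prod_subset (subset_univ _) fun q _ hq => by simp_all

lemma PowerSeries.inv_prod_one_sub_C_mul_X {k κ : Type*} [Field k] [Fintype κ] [DecidableEq κ]
    (a : κ → k) :
    (∏ q, (1 - C (a q) * X))⁻¹ = mk fun i => ∑ m : Sym κ i, (m.1.map a).prod := by
  rw [inv_eq_iff_mul_eq_one (by simp [map_prod]), mk_sum_sym_eq_prod, ← prod_mul_distrib]
  exact prod_eq_one fun q _ => by rw [mul_comm, one_sub_C_mul_X_mul_mk_pow]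

lemma Matrix.charpolyRev_diagonal {R n : Type*} [CommRing R] [Fintype n] [DecidableEq n]
    (d : n → R) :
    (Matrix.diagonal d).charpolyRev = ∏ i, (1 - Polynomial.C (d i) * Polynomial.X) := by
  rw [charpolyRev, diagonal_map (map_zero _), ← diagonal_smul, ← diagonal_one, diagonal_sub,
    det_diagonal]
  simp only [Pi.smul_apply, smul_eq_mul, mul_comm]

lemma LinearMap.charpolyRev_toMatrix_eq {K V ι κ : Type*} [Field K] [AddCommGroup V] [Module K V]
    [FiniteDimensional K V] [Fintype ι] [DecidableEq ι] [Fintype κ] [DecidableEq κ]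
    (b : Module.Basis ι K V) (c : Module.Basis κ K V) (f : V →ₗ[K] V) :
    (toMatrix b b f).charpolyRev = (toMatrix c c f).charpolyRev := by
  rw [← Matrix.reverse_charpoly, ← Matrix.reverse_charpoly, charpoly_toMatrix, charpoly_toMatrix]

lemma LinearMap.toMatrix_eq_diagonal {R M ι : Type*} [CommRing R] [AddCommGroup M] [Module R M]
    [Fintype ι] [DecidableEq ι] (b : Module.Basis ι R M) {f : M →ₗ[R] M} {μ : ι → R}
    (hf : ∀ q, f (b q) = μ q • b q) : toMatrix b b f = Matrix.diagonal μ := by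
  ext p q
  rcases eq_or_ne p q with rfl | hpq
  · simp [toMatrix_apply, hf]
  · simp [toMatrix_apply, hf, Matrix.diagonal_apply_ne _ hpq, hpq.symm]

lemma LinearMap.trace_eq_sum_of_apply_basis {R M ι : Type*} [CommRing R] [AddCommGroup M]
    [Module R M] [Fintype ι] [DecidableEq ι] (b : Module.Basis ι R M) {f : M →ₗ[R] M}
    {μ : ι → R} (hf : ∀ q, f (b q) = μ q • b q) : trace R M f = ∑ q, μ q := by
  rw [trace_eq_matrix_trace R b, toMatrix_eq_diagonal b hf, Matrix.trace_diagonal]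

lemma Module.End.isSemisimple_of_pow_eq_one {K V : Type*} [Field K] [CharZero K] [AddCommGroup V]
    [Module K V] {f : Module.End K V} {M : ℕ} (hM : M ≠ 0) (hf : f ^ M = 1) : f.IsSemisimple := by
  refine isSemisimple_of_squarefree_aeval_eq_zero
    (Polynomial.separable_X_pow_sub_C (1 : K) (by exact_mod_cast hM) one_ne_zero).squarefree ?_
  simp [hf]

lemma Module.End.IsSemisimple.exists_basis_eigenvectors {K V : Type*} [Field K] [IsAlgClosed K]
    [AddCommGroup V] [Module K V] [FiniteDimensional K V] {f : Module.End K V}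
    (hf : f.IsSemisimple) :
    ∃ (c : Module.Basis (Fin (Module.finrank K V)) K V) (μ : Fin (Module.finrank K V) → K),
      ∀ q, f (c q) = μ q • c q := by
  set S := ⋃ μ, (f.eigenspace μ : Set V)
  obtain ⟨s, hsS, hspan, hli⟩ := exists_linearIndependent K S
  have hsV : ⊤ ≤ Submodule.span K (Set.range ((↑) : s → V)) := by
    rw [Subtype.range_coe, hspan, ← Submodule.iSup_eq_span, hf.iSup_eigenspace_eq_top]
  let b := Module.Basis.mk hli hsV
  have hb : ∀ x : s, ∃ μ, f (b x) = μ • b x := fun x => by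
    obtain ⟨μ, hμ⟩ := Set.mem_iUnion.1 (hsS x.2)
    exact ⟨μ, by simpa [b] using Module.End.mem_eigenspace_iff.1 hμ⟩
  choose μ hμ using hb
  let e := b.indexEquiv (Module.finBasis K V)
  exact ⟨b.reindex e, μ ∘ e.symm, fun q => by simpa using hμ (e.symm q)⟩

lemma Representation.finrank_invariants_eq_average_trace {k G W : Type*} [Field k] [Group G] [Fintype G]
    [Invertible (Fintype.card G : k)] [AddCommGroup W] [Module k W] [FiniteDimensional k W]
    (τ : Representation k G W) :
    (Module.finrank k τ.invariants : k) =
      (Fintype.card G : k)⁻¹ * ∑ g, LinearMap.trace k W (τ g) := by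
  rw [← (isProj_averageMap τ).trace]
  simp [averageMap, GroupAlgebra.average, map_sum]

lemma Representation.iInf_eqLocus_eq_invariants {k G W : Type*} [CommRing k] [Group G]
    [AddCommGroup W] [Module k W] (τ : Representation k G W) :
    ⨅ g, LinearMap.eqLocus (τ g) LinearMap.id = τ.invariants := by
  ext x
  simp [Representation.mem_invariants]

namespace SymPow

variable {V : Type*} [AddCommGroup V] [Module ℂ V]

def mk (i : ℕ) : TensorPower ℂ i V →ₗ[ℂ] SymPow V i := (symRel V i).mkQ

lemma mk_surjective (i : ℕ) : Function.Surjective (mk (V := V) i) :=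
  Submodule.mkQ_surjective _

lemma mk_tprod_comp_perm {i : ℕ} (v : Fin i → V) (σ : Equiv.Perm (Fin i)) :
    mk i (tprod ℂ (v ∘ σ)) = mk i (tprod ℂ v) :=
  ((Submodule.Quotient.eq (symRel V i)).2 (Submodule.subset_span ⟨v, σ, rfl⟩)).symm

lemma map_mk_tprod {i : ℕ} (w : V →ₗ[ℂ] V) (v : Fin i → V) :
    map i w (mk i (tprod ℂ v)) = mk i (tprod ℂ (w ∘ v)) :=
  congrArg (mk i) (PiTensorProduct.map_tprod _ v)

lemma hom_ext {i : ℕ} {M : Type*} [AddCommGroup M] [Module ℂ M] {f g : SymPow V i →ₗ[ℂ] M}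
    (h : ∀ v : Fin i → V, f (mk i (tprod ℂ v)) = g (mk i (tprod ℂ v))) : f = g := by
  have hmk : f ∘ₗ mk i = g ∘ₗ mk i := PiTensorProduct.ext (MultilinearMap.ext h)
  ext x
  obtain ⟨y, rfl⟩ := mk_surjective i x
  exact LinearMap.congr_fun hmk y

def mapHom (i : ℕ) : Module.End ℂ V →* Module.End ℂ (SymPow V i) where
  toFun := map i
  map_one' := hom_ext fun v => by simp [map_mk_tprod, Module.End.one_eq_id]
  map_mul' f g := hom_ext fun v => by simp [map_mk_tprod, Function.comp_def]

variable {κ : Type*} (c : Module.Basis κ ℂ V)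

def monomial {i : ℕ} (m : Sym κ i) : SymPow V i := mk i (tprod ℂ (c ∘ m.toFn))

lemma mk_tprod_comp_basis {i : ℕ} (k : Fin i → κ) :
    mk i (tprod ℂ (c ∘ k)) = monomial c (Sym.ofFn k) := by
  obtain ⟨σ, hσ⟩ := Sym.exists_perm_of_ofFn_eq (Sym.ofFn_toFn (Sym.ofFn k))
  conv_lhs => rw [hσ, ← Function.comp_assoc, mk_tprod_comp_perm]
  rfl

lemma span_monomial (i : ℕ) : Submodule.span ℂ (Set.range (monomial c (i := i))) = ⊤ := by
  have hspan : Submodule.span ℂ (Set.range fun r : Fin i → κ => mk i (tprod ℂ (c ∘ r))) = ⊤ := by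
    have : (fun r : Fin i → κ => mk i (tprod ℂ (c ∘ r))) =
        mk i ∘ Basis.piTensorProduct (fun _ => c) :=
      funext fun r => by simp [Basis.piTensorProduct_apply, Function.comp_def]
    rw [this, Set.range_comp, Submodule.span_image, Module.Basis.span_eq, Submodule.map_top,
      LinearMap.range_eq_top.2 (mk_surjective i)]
  refine eq_top_iff.2 (hspan ▸ Submodule.span_mono ?_)
  rintro _ ⟨r, rfl⟩
  exact ⟨_, (mk_tprod_comp_basis c r).symm⟩

def toMvPolynomial (i : ℕ) : SymPow V i →ₗ[ℂ] MvPolynomial κ ℂ :=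
  (symRel V i).liftQ (PiTensorProduct.lift
    ((MultilinearMap.mkPiAlgebra ℂ (Fin i) _).compLinearMap fun _ => c.constr ℂ MvPolynomial.X)) <| by
    rw [symRel, Submodule.span_le]
    rintro _ ⟨v, σ, rfl⟩
    simp [Equiv.prod_comp σ (fun j => c.constr ℂ MvPolynomial.X (v j))]

lemma toMvPolynomial_mk_tprod {i : ℕ} (v : Fin i → V) :
    toMvPolynomial c i (mk i (tprod ℂ v)) = ∏ j, c.constr ℂ MvPolynomial.X (v j) := by
  change PiTensorProduct.lift _ (tprod ℂ v) = _
  simp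

lemma toMvPolynomial_monomial [DecidableEq κ] {i : ℕ} (m : Sym κ i) :
    toMvPolynomial c i (monomial c m) = MvPolynomial.monomial (Multiset.toFinsupp m.1) 1 := by
  simp [monomial, toMvPolynomial_mk_tprod, MvPolynomial.prod_X_eq_monomial, Sym.ofFn_toFn]

lemma linearIndependent_monomial (i : ℕ) : LinearIndependent ℂ (monomial c (i := i)) := by
  classical
  refine LinearIndependent.of_comp (toMvPolynomial c i) ?_
  have : toMvPolynomial c i ∘ monomial c =
      MvPolynomial.basisMonomials κ ℂ ∘ fun m : Sym κ i => Multiset.toFinsupp m.1 :=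
    funext fun m => by simp [toMvPolynomial_monomial, MvPolynomial.coe_basisMonomials]
  rw [this]
  exact (MvPolynomial.basisMonomials κ ℂ).linearIndependent.comp _
    fun m m' h => Subtype.ext (Multiset.toFinsupp.injective h)

def basis (i : ℕ) : Module.Basis (Sym κ i) ℂ (SymPow V i) :=
  .mk (linearIndependent_monomial c i) (span_monomial c i).ge

instance [FiniteDimensional ℂ V] (i : ℕ) : FiniteDimensional ℂ (SymPow V i) :=
  .of_basis (basis (Module.finBasis ℂ V) i)

lemma map_monomial {w : V →ₗ[ℂ] V} {μ : κ → ℂ} (hw : ∀ q, w (c q) = μ q • c q) {i : ℕ}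
    (m : Sym κ i) : map i w (monomial c m) = (m.1.map μ).prod • monomial c m := by
  have hprod : (m.1.map μ).prod = ∏ j, μ (m.toFn j) := by
    simpa [Sym.ofFn_toFn] using Sym.prod_map_ofFn m.toFn μ
  rw [monomial, map_mk_tprod, hprod, ← map_smul, ← MultilinearMap.map_smul_univ]
  simp [Function.comp_def, hw]

lemma trace_map [Fintype κ] [DecidableEq κ] {w : V →ₗ[ℂ] V} {μ : κ → ℂ}
    (hw : ∀ q, w (c q) = μ q • c q) (i : ℕ) :
    LinearMap.trace ℂ (SymPow V i) (map i w) = ∑ m : Sym κ i, (m.1.map μ).prod :=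
  LinearMap.trace_eq_sum_of_apply_basis (basis c i) fun m => by
    simpa [basis] using map_monomial c hw m

end SymPow

lemma SymPow.inv_charpolyRev_eq_mk_trace_map {V ι : Type*} [AddCommGroup V] [Module ℂ V]
    [FiniteDimensional ℂ V] [Fintype ι] [DecidableEq ι] (b : Module.Basis ι ℂ V)
    {f : Module.End ℂ V} (hf : f.IsSemisimple) :
    ((LinearMap.toMatrix b b f).charpolyRev : PowerSeries ℂ)⁻¹ =
      PowerSeries.mk fun i => LinearMap.trace ℂ (SymPow V i) (map i f) := by
  obtain ⟨c, μ, hc⟩ := hf.exists_basis_eigenvectors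
  have hcoe : ((∏ q, (1 - Polynomial.C (μ q) * Polynomial.X) : Polynomial ℂ) : PowerSeries ℂ) =
      ∏ q, (1 - PowerSeries.C (μ q) * PowerSeries.X) := by
    rw [← Polynomial.coeToPowerSeries.ringHom_apply, map_prod]
    simp [Polynomial.coeToPowerSeries.ringHom_apply]
  rw [LinearMap.charpolyRev_toMatrix_eq b c, LinearMap.toMatrix_eq_diagonal c hc,
    Matrix.charpolyRev_diagonal, hcoe, PowerSeries.inv_prod_one_sub_C_mul_X]
  simp_rw [trace_map c hc]

end

theorem stmt4 (G : Type*) [Group G] [Fintype G]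
    (V : Type*) [AddCommGroup V] [Module ℂ V] [FiniteDimensional ℂ V]
    (ρ : Representation ℂ G V)
    (ι : Type*) [Fintype ι] [DecidableEq ι] (b : Module.Basis ι ℂ V) :
    (PowerSeries.mk fun i => ((Module.finrank ℂ
        ↥(⨅ g : G, LinearMap.eqLocus (SymPow.map i (ρ g)) LinearMap.id) : ℕ) : ℂ)) =
      (Fintype.card G : ℂ)⁻¹ •
        ∑ g : G, ((Matrix.det (1 - (Polynomial.X : Polynomial ℂ) •
          (LinearMap.toMatrix b b (ρ g)).map Polynomial.C) : Polynomial ℂ) :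
            PowerSeries ℂ)⁻¹ := by
  have : Invertible (Fintype.card G : ℂ) :=
    invertibleOfNonzero (Nat.cast_ne_zero.2 Fintype.card_ne_zero)
  have hss (g : G) : Module.End.IsSemisimple (ρ g) := Module.End.isSemisimple_of_pow_eq_one
    Fintype.card_ne_zero (by rw [← map_pow, pow_card_eq_one, map_one])
  let τ i : Representation ℂ G (SymPow V i) := (SymPow.mapHom i).comp ρ
  ext i
  have hinv : ⨅ g, LinearMap.eqLocus (SymPow.map i (ρ g)) LinearMap.id = (τ i).invariants :=
    (τ i).iInf_eqLocus_eq_invariants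
  simp only [← Matrix.charpolyRev.eq_1, SymPow.inv_charpolyRev_eq_mk_trace_map b (hss _),
    coeff_mk, map_smul, map_sum, smul_eq_mul]
  rw [hinv]
  exact Representation.finrank_invariants_eq_average_trace (τ i)
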